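/- arXiv:2410.10986 — 4 statements merged into one kernel-verified Lean document; each statement's English description precedes it below -/
import Mathlib

section
/- Fix X ∈ ℝ^{L×d_v}, Y ∈ ℝ^{L×d_v}, W_V ∈ ℝ^{d_v×d_v}, and consider the linear self-attention loss G(W_Q, W_K) = ‖X W_Q W_Kᵀ Xᵀ X W_V / √d_k − Y‖_F² / (L d_v) as a function of the pair (W_Q, W_K) ∈ ℝ^{d_v×d_k} × ℝ^{d_v×d_k}. Then G is twice differentiable, and the mixed second Fréchet derivative at (W_Q, W_K) in directions U_Q (query slot) and U_K (key slot), both in ℝ^{d_v×d_k}, equals (2/(L d_v d_k)) · tr((X U_Q W_Kᵀ Xᵀ X W_V)ᵀ (X W_Q U_Kᵀ Xᵀ X W_V)) + (2/(L d_v √d_k)) · tr((F − Y)ᵀ X U_Q U_Kᵀ Xᵀ X W_V), where F = X W_Q W_Kᵀ Xᵀ X W_V / √d_k. -/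
open Matrix

attribute [local instance] Matrix.seminormedAddCommGroup Matrix.normedAddCommGroup
  Matrix.normedSpace

namespace LinAttnAux

variable {L dv : ℕ} (dk : ℕ) (X : Matrix (Fin L) (Fin dv) ℝ) (WV : Matrix (Fin dv) (Fin dv) ℝ)

noncomputable def entry (i : Fin L) (j : Fin dv) : Matrix (Fin L) (Fin dv) ℝ →L[ℝ] ℝ :=
  LinearMap.toContinuousLinearMap ((LinearMap.proj j).comp (LinearMap.proj (R := ℝ)
    (φ := fun _ : Fin L => Fin dv → ℝ) i))

@[simp] lemma entry_apply (i : Fin L) (j : Fin dv) (Z : Matrix (Fin L) (Fin dv) ℝ) :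
    entry i j Z = Z i j := rfl

def bilin : Matrix (Fin dv) (Fin dk) ℝ →ₗ[ℝ] Matrix (Fin dv) (Fin dk) ℝ →ₗ[ℝ]
    Matrix (Fin L) (Fin dv) ℝ :=
  LinearMap.mk₂ ℝ (fun Q K => X * Q * Kᵀ * Xᵀ * X * WV)
    (fun Q Q' K => by simp [Matrix.add_mul, Matrix.mul_add])
    (fun a Q K => by simp [Matrix.smul_mul, Matrix.mul_smul])
    (fun Q K K' => by simp [Matrix.transpose_add, Matrix.mul_add, Matrix.add_mul])
    (fun a Q K => by simp [Matrix.transpose_smul, Matrix.mul_smul, Matrix.smul_mul])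

noncomputable def bilinL : Matrix (Fin dv) (Fin dk) ℝ →L[ℝ] Matrix (Fin dv) (Fin dk) ℝ →L[ℝ]
    Matrix (Fin L) (Fin dv) ℝ :=
  LinearMap.toContinuousLinearMap
    { toFun := fun Q => LinearMap.toContinuousLinearMap (bilin dk X WV Q)
      map_add' := fun Q Q' => by ext K; simp [bilin]
      map_smul' := fun a Q => by ext K; simp [bilin] }

@[simp] lemma bilinL_apply (Q K : Matrix (Fin dv) (Fin dk) ℝ) :
    bilinL dk X WV Q K = X * Q * Kᵀ * Xᵀ * X * WV := rfl

lemma sum_apply₂ {E : Type*} [NormedAddCommGroup E] [NormedSpace ℝ E] {ι : Type*}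
    (s : Finset ι) (f : ι → E →L[ℝ] (E →L[ℝ] ℝ)) (u v : E) :
    (∑ i ∈ s, f i) u v = ∑ i ∈ s, f i u v := by
  simp

lemma term_apply₂ {E : Type*} [NormedAddCommGroup E] [NormedSpace ℝ E] (a : ℝ)
    (P : E →L[ℝ] (E →L[ℝ] ℝ)) (φ ψ : E →L[ℝ] ℝ) (u v : E) :
    (a • P + φ.smulRight ψ) u v = a * P u v + φ u * ψ v := by
  simp

end LinAttnAux


/-- **Mixed query–key block of the linear self-attention Hessian.** For
`G(W_Q, W_K) = ‖X W_Q W_Kᵀ Xᵀ X W_V / √d_k − Y‖_F² / (L d_v)`, the function `G`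
is twice differentiable and the mixed second Fréchet derivative at `(W_Q, W_K)`
in directions `U_Q` (query slot) and `U_K` (key slot) equals
`(2/(L d_v d_k)) tr((X U_Q W_Kᵀ Xᵀ X W_V)ᵀ (X W_Q U_Kᵀ Xᵀ X W_V))
  + (2/(L d_v √d_k)) tr((F − Y)ᵀ X U_Q U_Kᵀ Xᵀ X W_V)`
with `F = X W_Q W_Kᵀ Xᵀ X W_V / √d_k`. -/
theorem linear_mixed_query_key_hessian (L dv dk : ℕ)
    (X Y : Matrix (Fin L) (Fin dv) ℝ)
    (WV : Matrix (Fin dv) (Fin dv) ℝ)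
    (G : Matrix (Fin dv) (Fin dk) ℝ × Matrix (Fin dv) (Fin dk) ℝ → ℝ)
    (hG : ∀ WQ WK : Matrix (Fin dv) (Fin dk) ℝ,
      G (WQ, WK) =
        (∑ i, ∑ j, (((1 : ℝ) / Real.sqrt dk) • (X * WQ * WKᵀ * Xᵀ * X * WV) - Y) i j ^ 2) /
          ((L : ℝ) * (dv : ℝ))) :
    Differentiable ℝ G ∧ Differentiable ℝ (fderiv ℝ G) ∧
      ∀ WQ WK UQ UK : Matrix (Fin dv) (Fin dk) ℝ,
        fderiv ℝ (fderiv ℝ G) (WQ, WK) (UQ, 0) (0, UK) =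
          (2 / ((L : ℝ) * (dv : ℝ) * (dk : ℝ))) *
              Matrix.trace ((X * UQ * WKᵀ * Xᵀ * X * WV)ᵀ * (X * WQ * UKᵀ * Xᵀ * X * WV))
            + (2 / ((L : ℝ) * (dv : ℝ) * Real.sqrt dk)) *
              Matrix.trace
                ((((1 : ℝ) / Real.sqrt dk) • (X * WQ * WKᵀ * Xᵀ * X * WV) - Y)ᵀ *
                  (X * UQ * UKᵀ * Xᵀ * X * WV)) := by
  classical
  letI : TopologicalSpace (Matrix (Fin dv) (Fin dk) ℝ) :=
    (Matrix.seminormedAddCommGroup : SeminormedAddCommGroup (Matrix (Fin dv) (Fin dk) ℝ)).toPseudoMetricSpace.toUniformSpace.toTopologicalSpace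
  set s : ℝ := (1 : ℝ) / Real.sqrt dk with hs
  set c : ℝ := (L : ℝ) * (dv : ℝ) with hc
  set b : Matrix (Fin dv) (Fin dk) ℝ × Matrix (Fin dv) (Fin dk) ℝ → Matrix (Fin L) (Fin dv) ℝ :=
    fun p => X * p.1 * p.2ᵀ * Xᵀ * X * WV with hb
  have hbb : IsBoundedBilinearMap ℝ b := (LinAttnAux.bilinL dk X WV).isBoundedBilinearMap
  -- G explicitly
  have hGfun : G = fun p => (∑ i, ∑ j, (s * b p i j - Y i j) ^ 2) / c := by
    funext p
    rw [show G p = G (p.1, p.2) from rfl, hG p.1 p.2]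
    simp [hb, Matrix.sub_apply, Matrix.smul_apply, smul_eq_mul]
  -- first derivative
  set D1 : Matrix (Fin dv) (Fin dk) ℝ × Matrix (Fin dv) (Fin dk) ℝ →
      (Matrix (Fin dv) (Fin dk) ℝ × Matrix (Fin dv) (Fin dk) ℝ) →L[ℝ] ℝ :=
    fun p => ∑ i : Fin L, ∑ j : Fin dv,
      ((2 * s / c) * (s * b p i j - Y i j)) • ((LinAttnAux.entry i j).comp (hbb.deriv p))
    with hD1
  have hbd : ∀ p, HasFDerivAt b (hbb.deriv p) p := fun p => hbb.hasFDerivAt p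
  have hentry : ∀ (i : Fin L) (j : Fin dv) p,
      HasFDerivAt (fun p => b p i j) ((LinAttnAux.entry i j).comp (hbb.deriv p)) p :=
    fun i j p => (LinAttnAux.entry i j).hasFDerivAt.comp p (hbd p)
  have hg' : ∀ (i : Fin L) (j : Fin dv) p,
      HasFDerivAt (fun p => s * b p i j - Y i j)
        (s • ((LinAttnAux.entry i j).comp (hbb.deriv p))) p :=
    fun i j p => ((hentry i j p).const_mul s).sub_const (Y i j)
  have key1 : ∀ p, HasFDerivAt G (D1 p) p := by
    intro p
    rw [hGfun]
    have hsum : HasFDerivAt (fun p => ∑ i : Fin L, ∑ j : Fin dv, (s * b p i j - Y i j) ^ 2)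
        (∑ i : Fin L, ∑ j : Fin dv,
          ((s * b p i j - Y i j) • (s • ((LinAttnAux.entry i j).comp (hbb.deriv p))) +
           (s * b p i j - Y i j) • (s • ((LinAttnAux.entry i j).comp (hbb.deriv p))))) p := by
      refine HasFDerivAt.fun_sum fun i _ => ?_
      refine HasFDerivAt.fun_sum fun j _ => ?_
      simpa only [← pow_two] using (hg' i j p).fun_mul (hg' i j p)
    have h2 := hsum.const_mul (1 / c)
    have heq : (fun p => (∑ i : Fin L, ∑ j : Fin dv, (s * b p i j - Y i j) ^ 2) / c)
        = fun p => (1 / c) * ∑ i : Fin L, ∑ j : Fin dv, (s * b p i j - Y i j) ^ 2 := by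
      funext q; ring
    rw [heq]
    have hDeq : D1 p = (1 / c) • ∑ i : Fin L, ∑ j : Fin dv,
          ((s * b p i j - Y i j) • (s • ((LinAttnAux.entry i j).comp (hbb.deriv p))) +
           (s * b p i j - Y i j) • (s • ((LinAttnAux.entry i j).comp (hbb.deriv p)))) := by
      refine ContinuousLinearMap.ext fun v => ?_
      simp only [hD1, ContinuousLinearMap.coe_sum', Finset.sum_apply,
        ContinuousLinearMap.coe_smul', Pi.smul_apply, ContinuousLinearMap.add_apply,
        ContinuousLinearMap.coe_comp', Function.comp_apply, smul_eq_mul, Finset.mul_sum]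
      refine Finset.sum_congr rfl fun i _ => Finset.sum_congr rfl fun j _ => ?_
      ring
    rw [hDeq]
    exact h2
  have hdG : fderiv ℝ G = D1 := funext fun p => (key1 p).fderiv
  have diffG : Differentiable ℝ G := fun p => (key1 p).differentiableAt
  -- second derivative
  have hDlin : IsBoundedLinearMap ℝ
      (fun p : Matrix (Fin dv) (Fin dk) ℝ × Matrix (Fin dv) (Fin dk) ℝ => hbb.deriv p) :=
    hbb.isBoundedLinearMap_deriv
  set Dmap := hDlin.toContinuousLinearMap with hDmap
  have hDmap_apply : ∀ p, Dmap p = hbb.deriv p := fun p => rfl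
  set Ψ : Fin L → Fin dv →
      (Matrix (Fin dv) (Fin dk) ℝ × Matrix (Fin dv) (Fin dk) ℝ) →L[ℝ]
        ((Matrix (Fin dv) (Fin dk) ℝ × Matrix (Fin dv) (Fin dk) ℝ) →L[ℝ] ℝ) := fun i j =>
    (ContinuousLinearMap.compL ℝ (Matrix (Fin dv) (Fin dk) ℝ × Matrix (Fin dv) (Fin dk) ℝ)
      (Matrix (Fin L) (Fin dv) ℝ) ℝ (LinAttnAux.entry i j)).comp Dmap with hΨ
  have hΨ_apply : ∀ i j p, Ψ i j p = (LinAttnAux.entry i j).comp (hbb.deriv p) :=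
    fun i j p => rfl
  have hD1' : D1 = fun p => ∑ i : Fin L, ∑ j : Fin dv,
      ((2 * s / c) * (s * b p i j - Y i j)) • Ψ i j p := by
    funext p
    simp only [hD1, hΨ_apply]
  have hcoef : ∀ (i : Fin L) (j : Fin dv) p,
      HasFDerivAt (fun p => (2 * s / c) * (s * b p i j - Y i j))
        ((2 * s / c) • (s • ((LinAttnAux.entry i j).comp (hbb.deriv p)))) p :=
    fun i j p => (hg' i j p).const_mul _
  have key2 : ∀ p, HasFDerivAt D1
      (∑ i : Fin L, ∑ j : Fin dv,
        (((2 * s / c) * (s * b p i j - Y i j)) • Ψ i j +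
          ((2 * s / c) • (s • ((LinAttnAux.entry i j).comp (hbb.deriv p)))).smulRight
            (Ψ i j p))) p := by
    intro p
    rw [hD1']
    refine HasFDerivAt.fun_sum fun i _ => ?_
    refine HasFDerivAt.fun_sum fun j _ => ?_
    exact (hcoef i j p).smul (Ψ i j).hasFDerivAt
  refine ⟨diffG, ?_, ?_⟩
  · erw [hdG]; exact fun p => (key2 p).differentiableAt
  · intro WQ WK UQ UK
    erw [hdG, (key2 (WQ, WK)).fderiv]
    have traceEq : ∀ A B : Matrix (Fin L) (Fin dv) ℝ,
        Matrix.trace (Aᵀ * B) = ∑ i : Fin L, ∑ j : Fin dv, A i j * B i j := by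
      intro A B
      simp only [Matrix.trace, Matrix.diag, Matrix.mul_apply, Matrix.transpose_apply]
      exact Finset.sum_comm
    have e1 : 2 / (c * Real.sqrt dk) = 2 * s / c := by rw [hs]; ring
    have e2 : 2 / (c * (dk : ℝ)) = 2 * s / c * s := by
      rw [show (dk : ℝ) = Real.sqrt dk * Real.sqrt dk from
        (Real.mul_self_sqrt (Nat.cast_nonneg dk)).symm, hs]
      ring
    rw [traceEq, traceEq]
    refine (LinAttnAux.sum_apply₂ _ _ _ _).trans ?_
    rw [Finset.mul_sum, Finset.mul_sum, ← Finset.sum_add_distrib]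
    refine Finset.sum_congr rfl fun i _ => ?_
    refine (LinAttnAux.sum_apply₂ _ _ _ _).trans ?_
    rw [Finset.mul_sum, Finset.mul_sum, ← Finset.sum_add_distrib]
    refine Finset.sum_congr rfl fun j _ => ?_
    refine (LinAttnAux.term_apply₂ _ _ _ _ _ _).trans ?_
    refine Eq.trans (b := 2 * s / c * (s * b (WQ, WK) i j - Y i j) * (b (UQ, UK) i j + b (0, 0) i j) +
        (2 * s / c) * (s * (b (WQ, 0) i j + b (UQ, WK) i j)) * (b (WQ, UK) i j + b (0, WK) i j))
      rfl ?_
    simp only [hb, Matrix.transpose_zero, Matrix.mul_zero, Matrix.zero_mul, Matrix.zero_apply,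
      add_zero, zero_add, Matrix.sub_apply, Matrix.smul_apply, smul_eq_mul]
    rw [e1, e2]
    ring
end

section
/- Let A ∈ ℝ^{m×n}. Then (I_m ⊗ K_{m,n}) (vecr(A) ⊗ A) = (A ⊗ A ⊗ I_n) (I_n ⊗ K_{n,n}) (vecr(I_n) ⊗ I_n), as an identity of real m²n × n matrices. -/
open Matrix
open scoped Kronecker

/-- The commutation matrix `K_{N,M} ∈ ℝ^{MN×MN}`, with rows indexed by pairs
`(n, m)` and columns by pairs `(m', n')`, defined by
`[K_{N,M}]_{(n,m),(m',n')} = δ_{n,n'} δ_{m,m'}`. -/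
def commK (N M : ℕ) : Matrix (Fin N × Fin M) (Fin M × Fin N) ℝ :=
  Matrix.of fun p q => if p.1 = q.2 ∧ p.2 = q.1 then 1 else 0

/-- Row-major (row-stacking) vectorization of a matrix, as a column vector. -/
def vecr {m n : ℕ} (A : Matrix (Fin m) (Fin n) ℝ) : Matrix (Fin m × Fin n) Unit ℝ :=
  Matrix.of fun p _ => A p.1 p.2

/-- **Extraction identity.** For `A ∈ ℝ^{m×n}`,
`(I_m ⊗ K_{m,n})(vecr(A) ⊗ A) = (A ⊗ A ⊗ I_n)(I_n ⊗ K_{n,n})(vecr(I_n) ⊗ I_n)`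
as an identity of real `m²n × n` matrices (entries compared via the canonical
associativity reindexings of the row super-index). -/
theorem kron_vecr_extraction (m n : ℕ) (A : Matrix (Fin m) (Fin n) ℝ) :
    ∀ (a b : Fin m) (c : Fin n) (j : Fin n),
      (((1 : Matrix (Fin m) (Fin m) ℝ) ⊗ₖ commK m n) *
          (Matrix.reindex (Equiv.prodAssoc (Fin m) (Fin n) (Fin m)) (Equiv.refl _)
            (vecr A ⊗ₖ A)))
          (a, (b, c)) ((), j)
        =
      (((A ⊗ₖ A) ⊗ₖ (1 : Matrix (Fin n) (Fin n) ℝ)) *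
          (Matrix.reindex (Equiv.prodAssoc (Fin n) (Fin n) (Fin n)).symm
              (Equiv.prodAssoc (Fin n) (Fin n) (Fin n)).symm
            ((1 : Matrix (Fin n) (Fin n) ℝ) ⊗ₖ commK n n)) *
          (vecr (1 : Matrix (Fin n) (Fin n) ℝ) ⊗ₖ (1 : Matrix (Fin n) (Fin n) ℝ)))
          ((a, b), c) ((), j) := by
  intro a b c j
  simp only [Matrix.mul_apply, Matrix.reindex_apply, Matrix.submatrix_apply,
    Matrix.kroneckerMap_apply, commK, vecr, Matrix.one_apply, Matrix.of_apply,
    Equiv.prodAssoc, Equiv.coe_fn_mk, Equiv.coe_fn_symm_mk, Equiv.refl_symm,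
    Equiv.refl_apply, Fintype.sum_prod_type]
  simp [ite_and, mul_ite, ite_mul, Finset.sum_ite_eq, Finset.sum_ite_eq']
end

section
/- Let A ∈ ℝ^{m×n} and B ∈ ℝ^{p×q}. Then the vertically stacked block matrix [[I_q ⊗ A],[B ⊗ I_n]] ∈ ℝ^{(qm+pn)×qn} has rank equal to q·rank(A) + n·rank(B) − rank(A)·rank(B). -/
open Matrix
open scoped Kronecker

namespace StackedKroneckerAux

open Module

def rowColSub {κ ι : Type*} (W : Submodule ℝ (κ → ℝ)) (V : Submodule ℝ (ι → ℝ)) :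
    Submodule ℝ (κ × ι → ℝ) where
  carrier := {x | (∀ j, (fun i => x (j, i)) ∈ V) ∧ (∀ i, (fun j => x (j, i)) ∈ W)}
  add_mem' := fun ha hb =>
    ⟨fun j => V.add_mem (ha.1 j) (hb.1 j), fun i => W.add_mem (ha.2 i) (hb.2 i)⟩
  zero_mem' := ⟨fun _ => V.zero_mem, fun _ => W.zero_mem⟩
  smul_mem' := fun c _ h =>
    ⟨fun j => V.smul_mem c (h.1 j), fun i => W.smul_mem c (h.2 i)⟩

theorem finrank_rowColSub {κ ι : Type*} [Fintype κ] [Fintype ι] [DecidableEq κ] [DecidableEq ι]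
    (W : Submodule ℝ (κ → ℝ)) (V : Submodule ℝ (ι → ℝ)) :
    finrank ℝ (rowColSub W V) = finrank ℝ W * finrank ℝ V := by
  classical
  set a := finrank ℝ V with ha
  set b := finrank ℝ W with hb
  let bV : Basis (Fin a) ℝ V := finBasis ℝ V
  let bW : Basis (Fin b) ℝ W := finBasis ℝ W
  let cV : Fin a → (ι → ℝ) := fun k => (bV k : ι → ℝ)
  let cW : Fin b → (κ → ℝ) := fun l => (bW l : κ → ℝ)
  have hcV : LinearIndependent ℝ cV := bV.linearIndependent.map' V.subtype V.ker_subtype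
  have hcW : LinearIndependent ℝ cW := bW.linearIndependent.map' W.subtype W.ker_subtype
  have memF : ∀ lk : Fin b × Fin a,
      (fun ji : κ × ι => cW lk.1 ji.1 * cV lk.2 ji.2) ∈ rowColSub W V := by
    intro lk
    constructor
    · intro j
      have : (fun i => cW lk.1 j * cV lk.2 i) = cW lk.1 j • cV lk.2 := rfl
      rw [this]
      exact V.smul_mem _ (bV lk.2).2
    · intro i
      have : (fun j => cW lk.1 j * cV lk.2 i) = cV lk.2 i • cW lk.1 := by
        funext j; simp [mul_comm]
      rw [this]
      exact W.smul_mem _ (bW lk.1).2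
  let F : Fin b × Fin a → rowColSub W V := fun lk =>
    ⟨fun ji => cW lk.1 ji.1 * cV lk.2 ji.2, memF lk⟩
  have hFi : LinearIndependent ℝ F := by
    apply LinearIndependent.of_comp ((rowColSub W V).subtype)
    rw [Fintype.linearIndependent_iff]
    intro c hc
    have hc' : ∀ j i, ∑ lk : Fin b × Fin a, c lk * (cW lk.1 j * cV lk.2 i) = 0 := by
      intro j i
      have := congrFun hc (j, i)
      simpa [Finset.sum_apply] using this
    have ht : ∀ (i : ι) (l : Fin b), (∑ k, c (l, k) * cV k i) = 0 := by
      intro i l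
      have h1 : ∑ l : Fin b, (∑ k, c (l, k) * cV k i) • cW l = 0 := by
        funext j
        have h0 := hc' j i
        rw [Fintype.sum_prod_type] at h0
        rw [Finset.sum_apply]
        simp only [Pi.smul_apply, smul_eq_mul, Pi.zero_apply]
        rw [← h0]
        refine Finset.sum_congr rfl fun l _ => ?_
        rw [Finset.sum_mul]
        exact Finset.sum_congr rfl fun k _ => by ring
      exact Fintype.linearIndependent_iff.mp hcW _ h1 l
    intro lk
    have h2 : ∑ k, c (lk.1, k) • cV k = 0 := by
      funext i
      simpa [Finset.sum_apply] using ht i lk.1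
    have := Fintype.linearIndependent_iff.mp hcV _ h2 lk.2
    simpa using this
  have hFs : ⊤ ≤ Submodule.span ℝ (Set.range F) := by
    rintro ⟨x, hx1, hx2⟩ -
    obtain ⟨V', hV'⟩ := Submodule.exists_isCompl V
    let π : (ι → ℝ) →ₗ[ℝ] V := V.linearProjOfIsCompl V' hV'
    let L : Fin a → (ι → ℝ) →ₗ[ℝ] ℝ := fun k => (bV.coord k) ∘ₗ π
    let d : Fin a → (κ → ℝ) := fun k j => L k (fun i => x (j, i))
    have hd : ∀ k, d k ∈ W := by
      intro k
      have hdk : d k = ∑ i, (L k fun j' => if i = j' then 1 else 0) • (fun j => x (j, i)) := by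
        funext j
        rw [Finset.sum_apply]
        simp only [Pi.smul_apply, smul_eq_mul]
        rw [show d k j = L k (fun i => x (j, i)) from rfl,
          LinearMap.pi_apply_eq_sum_univ (L k) (fun i => x (j, i))]
        simp [mul_comm]
      rw [hdk]
      exact Submodule.sum_mem _ fun i _ => W.smul_mem _ (hx2 i)
    have hrow : ∀ j i, x (j, i) = ∑ k, d k j * cV k i := by
      intro j i
      have h1 : π (fun i => x (j, i)) = ⟨fun i => x (j, i), hx1 j⟩ :=
        Submodule.linearProjOfIsCompl_apply_left hV' ⟨_, hx1 j⟩
      have h2 : ∀ k, d k j = bV.repr ⟨fun i => x (j, i), hx1 j⟩ k := by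
        intro k
        show bV.coord k (π fun i => x (j, i)) = _
        rw [h1]; rfl
      have h3 := bV.sum_repr ⟨fun i => x (j, i), hx1 j⟩
      have h4 := congrArg (fun v : V => (v : ι → ℝ) i) h3
      simp only [AddSubmonoidClass.coe_finset_sum, Finset.sum_apply, SetLike.val_smul,
        Pi.smul_apply, smul_eq_mul] at h4
      rw [← h4]
      exact Finset.sum_congr rfl fun k _ => by rw [h2 k]
    have hdcol : ∀ k j, d k j = ∑ l, bW.repr ⟨d k, hd k⟩ l * cW l j := by
      intro k j
      have h3 := bW.sum_repr ⟨d k, hd k⟩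
      have h4 := congrArg (fun v : W => (v : κ → ℝ) j) h3
      simp only [AddSubmonoidClass.coe_finset_sum, Finset.sum_apply, SetLike.val_smul,
        Pi.smul_apply, smul_eq_mul] at h4
      exact h4.symm
    have key : (⟨x, hx1, hx2⟩ : rowColSub W V)
        = ∑ lk : Fin b × Fin a, (bW.repr ⟨d lk.2, hd lk.2⟩ lk.1) • F lk := by
      apply Subtype.ext
      push_cast [AddSubmonoidClass.coe_finset_sum]
      funext ji
      obtain ⟨j, i⟩ := ji
      rw [Finset.sum_apply, Fintype.sum_prod_type]
      simp only [SetLike.val_smul, Pi.smul_apply, smul_eq_mul, F]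
      rw [hrow j i]
      rw [Finset.sum_comm]
      refine Finset.sum_congr rfl fun k _ => ?_
      rw [hdcol k j, Finset.sum_mul]
      exact Finset.sum_congr rfl fun l _ => by ring
    rw [key]
    exact Submodule.sum_mem _ fun lk _ => Submodule.smul_mem _ _
      (Submodule.subset_span ⟨lk, rfl⟩)
  let Fb : Basis (Fin b × Fin a) ℝ (rowColSub W V) := Basis.mk hFi hFs
  rw [finrank_eq_card_basis Fb]
  simp [Fintype.card_prod]

end StackedKroneckerAux

/-- **Rank of a stacked Kronecker block matrix.** For `A ∈ ℝ^{m×n}` and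
`B ∈ ℝ^{p×q}`, the vertically stacked block matrix `[[I_q ⊗ A],[B ⊗ I_n]]` has
rank `q·rank(A) + n·rank(B) − rank(A)·rank(B)`. -/
theorem rank_stacked_kronecker (m n p q : ℕ)
    (A : Matrix (Fin m) (Fin n) ℝ) (B : Matrix (Fin p) (Fin q) ℝ) :
    (Matrix.fromRows ((1 : Matrix (Fin q) (Fin q) ℝ) ⊗ₖ A)
        (B ⊗ₖ (1 : Matrix (Fin n) (Fin n) ℝ))).rank
      = q * A.rank + n * B.rank - A.rank * B.rank := by
  classical
  open StackedKroneckerAux Module in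
  set M := Matrix.fromRows ((1 : Matrix (Fin q) (Fin q) ℝ) ⊗ₖ A)
      (B ⊗ₖ (1 : Matrix (Fin n) (Fin n) ℝ)) with hM
  -- kernel identification
  have hmv1 : ∀ x : Fin q × Fin n → ℝ,
      ((1 : Matrix (Fin q) (Fin q) ℝ) ⊗ₖ A).mulVec x
        = fun jk => A.mulVec (fun i => x (jk.1, i)) jk.2 := by
    intro x
    funext jk
    obtain ⟨j, k⟩ := jk
    simp [Matrix.mulVec, dotProduct, Matrix.kroneckerMap_apply, Matrix.one_apply,
      Fintype.sum_prod_type, ite_mul]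
  have hmv2 : ∀ x : Fin q × Fin n → ℝ,
      (B ⊗ₖ (1 : Matrix (Fin n) (Fin n) ℝ)).mulVec x
        = fun li => B.mulVec (fun j => x (j, li.2)) li.1 := by
    intro x
    funext li
    obtain ⟨l, i⟩ := li
    simp [Matrix.mulVec, dotProduct, Matrix.kroneckerMap_apply, Matrix.one_apply,
      Fintype.sum_prod_type, mul_ite]
  have hker : LinearMap.ker M.mulVecLin
      = rowColSub (LinearMap.ker B.mulVecLin) (LinearMap.ker A.mulVecLin) := by
    ext x
    simp only [LinearMap.mem_ker, Matrix.mulVecLin_apply]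
    constructor
    · intro h
      have h' : ∀ y, M.mulVec x y = 0 := fun y => congrFun h y
      constructor
      · intro j
        funext k
        have := h' (Sum.inl (j, k))
        rw [hM, Matrix.fromRows_mulVec, Sum.elim_inl, hmv1] at this
        exact this
      · intro i
        funext l
        have := h' (Sum.inr (l, i))
        rw [hM, Matrix.fromRows_mulVec, Sum.elim_inr, hmv2] at this
        exact this
    · rintro ⟨h1, h2⟩
      rw [hM, Matrix.fromRows_mulVec]
      funext y
      cases y with
      | inl jk =>
        rw [Sum.elim_inl, hmv1]
        exact congrFun (h1 jk.1) jk.2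
      | inr li =>
        rw [Sum.elim_inr, hmv2]
        exact congrFun (h2 li.2) li.1
  -- rank-nullity
  have hMrank : M.rank + finrank ℝ (LinearMap.ker M.mulVecLin) = q * n := by
    have := LinearMap.finrank_range_add_finrank_ker M.mulVecLin
    rw [Module.finrank_fintype_fun_eq_card, Fintype.card_prod, Fintype.card_fin,
      Fintype.card_fin] at this
    exact this
  have hArank : A.rank + finrank ℝ (LinearMap.ker A.mulVecLin) = n := by
    have := LinearMap.finrank_range_add_finrank_ker A.mulVecLin
    rw [Module.finrank_fintype_fun_eq_card, Fintype.card_fin] at this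
    exact this
  have hBrank : B.rank + finrank ℝ (LinearMap.ker B.mulVecLin) = q := by
    have := LinearMap.finrank_range_add_finrank_ker B.mulVecLin
    rw [Module.finrank_fintype_fun_eq_card, Fintype.card_fin] at this
    exact this
  set rA := A.rank
  set rB := B.rank
  set dA := finrank ℝ (LinearMap.ker A.mulVecLin)
  set dB := finrank ℝ (LinearMap.ker B.mulVecLin)
  have hX : M.rank + dB * dA = q * n := by
    rw [← hMrank, hker, finrank_rowColSub]
  have e1 : q * n = rA * rB + dB * rA + dA * rB + dB * dA := by
    rw [← hArank, ← hBrank]; ring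
  have e2 : q * rA + n * rB = (rA * rB + dB * rA + dA * rB) + rA * rB := by
    rw [← hArank, ← hBrank]; ring
  rw [e2, Nat.add_sub_cancel]
  exact Nat.add_right_cancel (hX.trans e1)
end

section
/- Let d_v, d_k ≥ 1 and let W_Q, W_K ∈ ℝ^{d_v×d_k} both have full rank (rank equal to min(d_v, d_k)). Define V := [ (W_Q ⊗ I_{d_v}) K_{d_k,d_v} , I_{d_v} ⊗ W_K ] ∈ ℝ^{d_v² × 2 d_v d_k} (horizontal concatenation of two d_v²×(d_v d_k) blocks). Then for every matrix U ∈ ℝ^{d_v²×d_v²}, rank(Vᵀ U V) ≤ 2 d_k d_v − d_k² if d_k < d_v, and rank(Vᵀ U V) ≤ d_v² if d_k ≥ d_v. In particular, the T-outer-product Hessian (1/d_k)·Vᵀ U V of the query–key block of self-attention obeys these rank bounds. -/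
/-!
Since `rank (Vᵀ U V) ≤ rank V`, it suffices to bound the rank of `V = [A, B]`. Its column space is
`range A + range B`, so `rank V = rank A + rank B - dim (range A ⊓ range B)`. Both blocks have
`d_k d_v` columns, and both column spaces contain the range of `W_Q ⊗ W_K`, since
`W_Q ⊗ W_K = (W_Q ⊗ I) (I ⊗ W_K) = (I ⊗ W_K) (W_Q ⊗ I)` and `K_{d_k,d_v}` is invertible. When
`d_k < d_v` the full-rank matrices `W_Q`, `W_K` have left inverses, so `W_Q ⊗ W_K` has rank `d_k²`.
-/

open Matrix
open scoped Kronecker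

theorem commK_mul_commK (N M : ℕ) : commK N M * commK M N = 1 := by
  ext p q
  simp [commK, mul_apply, one_apply, Fintype.sum_prod_type, ite_and, Prod.ext_iff]

namespace Matrix

variable {K : Type*} [Field K] {l m n n' p : Type*} [Fintype n] [Fintype n'] [Fintype p]

theorem range_mulVecLin_mul_le [Fintype m] (A : Matrix l m K) (B : Matrix m n K) :
    LinearMap.range (A * B).mulVecLin ≤ LinearMap.range A.mulVecLin := by
  rw [mulVecLin_mul]
  exact LinearMap.range_comp_le_range _ _

theorem range_mulVecLin_fromCols (A : Matrix m n K) (B : Matrix m n' K) :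
    LinearMap.range (fromCols A B).mulVecLin =
      LinearMap.range A.mulVecLin ⊔ LinearMap.range B.mulVecLin := by
  have hcol : (fromCols A B).col = Sum.elim A.col B.col := by
    ext (i | i) <;> rfl
  rw [range_mulVecLin, range_mulVecLin, range_mulVecLin, hcol, Set.Sum.elim_range,
    Submodule.span_union]

theorem rank_fromCols_add_rank_le (A : Matrix m n K) (B : Matrix m n' K) (C : Matrix m p K)
    (hA : LinearMap.range C.mulVecLin ≤ LinearMap.range A.mulVecLin)
    (hB : LinearMap.range C.mulVecLin ≤ LinearMap.range B.mulVecLin) :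
    (fromCols A B).rank + C.rank ≤ A.rank + B.rank := by
  have hsup := Submodule.finrank_sup_add_finrank_inf_eq
    (LinearMap.range A.mulVecLin) (LinearMap.range B.mulVecLin)
  have hinf := Submodule.finrank_mono (le_inf hA hB)
  simp only [rank]
  rw [range_mulVecLin_fromCols]
  omega

theorem exists_mul_eq_one_of_rank_eq_card_width [Fintype m] [DecidableEq m] [DecidableEq n]
    (A : Matrix m n K) (h : A.rank = Fintype.card n) : ∃ X : Matrix n m K, X * A = 1 := by
  have hker : LinearMap.ker A.mulVecLin = ⊥ := by
    have := A.mulVecLin.finrank_range_add_finrank_ker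
    rw [← rank, h, Module.finrank_fintype_fun_eq_card] at this
    exact Submodule.finrank_eq_zero.1 (by omega)
  obtain ⟨g, hg⟩ := A.mulVecLin.exists_leftInverse_of_injective hker
  refine ⟨LinearMap.toMatrix' g, ?_⟩
  simpa [LinearMap.toMatrix'_comp, ← Matrix.toLin'_apply'] using congrArg LinearMap.toMatrix' hg

theorem rank_kronecker_of_rank_eq_card_width {m' : Type*} [Fintype m] [DecidableEq m]
    [Fintype m'] [DecidableEq m'] [DecidableEq n] [DecidableEq n']
    (A : Matrix m n K) (B : Matrix m' n' K)
    (hA : A.rank = Fintype.card n) (hB : B.rank = Fintype.card n') :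
    (A ⊗ₖ B).rank = Fintype.card n * Fintype.card n' := by
  obtain ⟨X, hX⟩ := exists_mul_eq_one_of_rank_eq_card_width A hA
  obtain ⟨Y, hY⟩ := exists_mul_eq_one_of_rank_eq_card_width B hB
  refine le_antisymm (by simpa using rank_le_card_width (A ⊗ₖ B)) ?_
  calc Fintype.card n * Fintype.card n' = ((X ⊗ₖ Y) * (A ⊗ₖ B)).rank := by
        rw [← mul_kronecker_mul, hX, hY, one_kronecker_one, rank_one, Fintype.card_prod]
    _ ≤ (A ⊗ₖ B).rank := rank_mul_le_right _ _

end Matrix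

theorem rank_qk_fromCols_add_sq_le {dv dk : ℕ} (WQ WK : Matrix (Fin dv) (Fin dk) ℝ)
    (hQ : WQ.rank = dk) (hK : WK.rank = dk) :
    (fromCols ((WQ ⊗ₖ (1 : Matrix (Fin dv) (Fin dv) ℝ)) * commK dk dv)
      ((1 : Matrix (Fin dv) (Fin dv) ℝ) ⊗ₖ WK)).rank + dk ^ 2 ≤ 2 * dk * dv := by
  have hQK : (WQ ⊗ₖ WK).rank = dk ^ 2 := by
    rw [rank_kronecker_of_rank_eq_card_width WQ WK (by rwa [Fintype.card_fin])
      (by rwa [Fintype.card_fin]), Fintype.card_fin, sq]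
  have hleft : WQ ⊗ₖ WK =
      (WQ ⊗ₖ (1 : Matrix (Fin dv) (Fin dv) ℝ)) * commK dk dv *
        (commK dv dk * ((1 : Matrix (Fin dk) (Fin dk) ℝ) ⊗ₖ WK)) := by
    rw [← Matrix.mul_assoc, Matrix.mul_assoc _ (commK dk dv), commK_mul_commK, Matrix.mul_one,
      ← mul_kronecker_mul, Matrix.mul_one, Matrix.one_mul]
  have hright : WQ ⊗ₖ WK =
      ((1 : Matrix (Fin dv) (Fin dv) ℝ) ⊗ₖ WK) * (WQ ⊗ₖ (1 : Matrix (Fin dk) (Fin dk) ℝ)) := by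
    rw [← mul_kronecker_mul, Matrix.mul_one, Matrix.one_mul]
  have key := rank_fromCols_add_rank_le _ _ (WQ ⊗ₖ WK)
    (hleft ▸ range_mulVecLin_mul_le _ _) (hright ▸ range_mulVecLin_mul_le _ _)
  have hQ' := rank_le_card_width ((WQ ⊗ₖ (1 : Matrix (Fin dv) (Fin dv) ℝ)) * commK dk dv)
  have hK' := rank_le_card_width ((1 : Matrix (Fin dv) (Fin dv) ℝ) ⊗ₖ WK)
  simp only [Fintype.card_prod, Fintype.card_fin] at hQ' hK'
  rw [hQK] at key
  linarith [Nat.mul_comm dv dk]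

theorem qk_outer_product_rank_bound_general (dv dk : ℕ)
    (WQ WK : Matrix (Fin dv) (Fin dk) ℝ)
    (hQ : WQ.rank = min dv dk) (hK : WK.rank = min dv dk)
    (V : Matrix (Fin dv × Fin dv) ((Fin dv × Fin dk) ⊕ (Fin dv × Fin dk)) ℝ)
    (hV : V = Matrix.fromCols
      ((WQ ⊗ₖ (1 : Matrix (Fin dv) (Fin dv) ℝ)) * commK dk dv)
      ((1 : Matrix (Fin dv) (Fin dv) ℝ) ⊗ₖ WK)) :
    ∀ U : Matrix (Fin dv × Fin dv) (Fin dv × Fin dv) ℝ,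
      (Vᵀ * U * V).rank ≤ if dk < dv then 2 * dk * dv - dk ^ 2 else dv ^ 2 := by
  intro U
  split_ifs with hlt
  · rw [min_eq_right hlt.le] at hQ hK
    calc (Vᵀ * U * V).rank ≤ V.rank := rank_mul_le_right _ _
      _ ≤ 2 * dk * dv - dk ^ 2 :=
        Nat.le_sub_of_add_le (hV ▸ rank_qk_fromCols_add_sq_le WQ WK hQ hK)
  · calc (Vᵀ * U * V).rank ≤ (Vᵀ * U).rank := rank_mul_le_left _ _
      _ ≤ dv ^ 2 := by simpa [sq] using rank_le_card_width (Vᵀ * U)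

/-- **Rank bound for the T-outer-product Hessian of the query–key block.**
Let `W_Q, W_K ∈ ℝ^{d_v×d_k}` have full rank and let
`V = [ (W_Q ⊗ I_{d_v}) K_{d_k,d_v} , I_{d_v} ⊗ W_K ] ∈ ℝ^{d_v² × 2 d_v d_k}`.
Then for every `U ∈ ℝ^{d_v²×d_v²}`, `rank(Vᵀ U V) ≤ 2 d_k d_v − d_k²` if
`d_k < d_v`, and `rank(Vᵀ U V) ≤ d_v²` if `d_k ≥ d_v`. -/
theorem qk_outer_product_rank_bound (dv dk : ℕ) (hdv : 1 ≤ dv) (hdk : 1 ≤ dk)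
    (WQ WK : Matrix (Fin dv) (Fin dk) ℝ)
    (hQ : WQ.rank = min dv dk) (hK : WK.rank = min dv dk)
    (V : Matrix (Fin dv × Fin dv) ((Fin dv × Fin dk) ⊕ (Fin dv × Fin dk)) ℝ)
    (hV : V = Matrix.fromCols
      ((WQ ⊗ₖ (1 : Matrix (Fin dv) (Fin dv) ℝ)) * commK dk dv)
      ((1 : Matrix (Fin dv) (Fin dv) ℝ) ⊗ₖ WK)) :
    ∀ U : Matrix (Fin dv × Fin dv) (Fin dv × Fin dv) ℝ,
      (Vᵀ * U * V).rank ≤ if dk < dv then 2 * dk * dv - dk ^ 2 else dv ^ 2 :=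
  qk_outer_product_rank_bound_general dv dk WQ WK hQ hK V hV
end
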